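/- Let k ≥ 1 be an integer, λ₀ > 0 a real number, λ₁, …, λ_k real numbers with λ_i ≤ λ₀ for every i, and c₁, …, c_k nonnegative reals. Let f₀ : [0,∞) → ℝ be locally integrable with 0 ≤ f₀(u) ≤ e^{λ₀ u} for all u ≥ 0, and define recursively f_i(u) := c_i ∫_0^u e^{λ_i (u−s)} f_{i−1}(s) ds for 1 ≤ i ≤ k. Then for every 1 ≤ i ≤ k and every u ≥ 0 one has f_i(u) ≤ ( Π_{j=1}^{i} c_j d_j ) · u^{θ(i)} · e^{λ₀ u}, where d_j := 1 if λ_j = λ₀ and d_j := 1/(λ₀ − λ_j) if λ_j < λ₀, and θ(i) := #{ 1 ≤ j ≤ i : λ_j = λ₀ }. -/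
import Mathlib


open MeasureTheory

private lemma exp_integral_aux (a u : ℝ) (ha : a ≠ 0) :
    ∫ s in (0:ℝ)..u, Real.exp (a * s) = (Real.exp (a * u) - 1) / a := by
  have h := intervalIntegral.mul_integral_comp_mul_left (f := Real.exp) (a := (0:ℝ)) (b := u) a
  rw [mul_zero] at h
  rw [eq_div_iff ha, mul_comm, h, integral_exp, Real.exp_zero]

/-- Upper bound on the expected size of the `i`-th mutant subpopulation along a
mono-directional pathway under the non-increasing growth rate condition: if
`0 ≤ f 0 ≤ e^{λ₀ u}` and `f i u = c i ∫_0^u e^{λ_i (u-s)} f (i-1) s ds`, then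
`f i u ≤ (∏_{j=1}^i c_j d_j) u^{θ(i)} e^{λ₀ u}`, where `d_j = 1` if `λ_j = λ₀`,
`d_j = 1/(λ₀ - λ_j)` otherwise, and `θ(i) = #{1 ≤ j ≤ i : λ_j = λ₀}`. -/
theorem stmt5 (k : ℕ) (hk : 1 ≤ k) (lam0 : ℝ) (hlam0 : 0 < lam0)
    (lam : ℕ → ℝ) (hlam : ∀ i, 1 ≤ i → i ≤ k → lam i ≤ lam0)
    (c : ℕ → ℝ) (hc : ∀ i, 1 ≤ i → i ≤ k → 0 ≤ c i)
    (f : ℕ → ℝ → ℝ)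
    (hf0loc : LocallyIntegrableOn (f 0) (Set.Ici 0))
    (hf0 : ∀ u : ℝ, 0 ≤ u → 0 ≤ f 0 u ∧ f 0 u ≤ Real.exp (lam0 * u))
    (hrec : ∀ i, 1 ≤ i → i ≤ k → ∀ u : ℝ, 0 ≤ u →
      f i u = c i * ∫ s in (0:ℝ)..u, Real.exp (lam i * (u - s)) * f (i - 1) s) :
    ∀ i, 1 ≤ i → i ≤ k → ∀ u : ℝ, 0 ≤ u →
      f i u ≤
        (∏ j ∈ Finset.Icc 1 i, c j * (if lam j = lam0 then 1 else 1 / (lam0 - lam j))) *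
          u ^ ((Finset.Icc 1 i).filter (fun j => lam j = lam0)).card *
          Real.exp (lam0 * u) := by
  -- the `d j` factors are nonnegative
  have hd : ∀ j, 1 ≤ j → j ≤ k →
      0 ≤ (if lam j = lam0 then (1:ℝ) else 1 / (lam0 - lam j)) := by
    intro j h1 h2
    by_cases h : lam j = lam0
    · simp [h]
    · have hj : 0 < lam0 - lam j := by
        have : lam j < lam0 := lt_of_le_of_ne (hlam j h1 h2) h
        linarith
      simp only [h, if_false]
      positivity
  -- key strengthened claim: nonnegativity together with the bound, for all i ≤ k
  have key : ∀ i, i ≤ k → ∀ u : ℝ, 0 ≤ u →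
      0 ≤ f i u ∧ f i u ≤
        (∏ j ∈ Finset.Icc 1 i, c j * (if lam j = lam0 then 1 else 1 / (lam0 - lam j))) *
          u ^ ((Finset.Icc 1 i).filter (fun j => lam j = lam0)).card *
          Real.exp (lam0 * u) := by
    intro i
    induction i with
    | zero =>
      intro _ u hu
      simpa using hf0 u hu
    | succ m ih =>
      intro hik u hu
      have hm : m ≤ k := Nat.le_of_succ_le hik
      have h1m : 1 ≤ m + 1 := Nat.succ_le_succ (Nat.zero_le m)
      set P : ℝ := ∏ j ∈ Finset.Icc 1 m, c j * (if lam j = lam0 then 1 else 1 / (lam0 - lam j))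
        with hPdef
      set θ : ℕ := ((Finset.Icc 1 m).filter (fun j => lam j = lam0)).card with hθdef
      have hP : 0 ≤ P := by
        apply Finset.prod_nonneg
        intro j hj
        rw [Finset.mem_Icc] at hj
        exact mul_nonneg (hc j hj.1 (hj.2.trans hm)) (hd j hj.1 (hj.2.trans hm))
      -- splitting the product and the count at the top index
      have hprod : (∏ j ∈ Finset.Icc 1 (m+1),
          c j * (if lam j = lam0 then 1 else 1 / (lam0 - lam j))) =
          P * (c (m+1) * (if lam (m+1) = lam0 then 1 else 1 / (lam0 - lam (m+1)))) := by
        rw [Finset.prod_Icc_succ_top h1m]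
      have hinsert : Finset.Icc 1 (m+1) = insert (m+1) (Finset.Icc 1 m) := by
        ext j
        simp only [Finset.mem_Icc, Finset.mem_insert]
        omega
      have hcM : 0 ≤ c (m+1) := hc (m+1) h1m hik
      have hrec' := hrec (m+1) h1m hik u hu
      simp only [Nat.add_sub_cancel] at hrec'
      -- nonnegativity of f (m+1) u
      have hnonneg : 0 ≤ f (m+1) u := by
        rw [hrec']
        refine mul_nonneg hcM (intervalIntegral.integral_nonneg hu ?_)
        intro s hs
        exact mul_nonneg (Real.exp_nonneg _) ((ih hm s hs.1).1)
      refine ⟨hnonneg, ?_⟩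
      -- the target right-hand side is nonnegative
      have hRHSnn : 0 ≤ (∏ j ∈ Finset.Icc 1 (m+1),
          c j * (if lam j = lam0 then 1 else 1 / (lam0 - lam j))) *
          u ^ ((Finset.Icc 1 (m+1)).filter (fun j => lam j = lam0)).card *
          Real.exp (lam0 * u) := by
        rw [hprod]
        have := hd (m+1) h1m hik
        positivity
      by_cases hint : IntervalIntegrable
          (fun s => Real.exp (lam (m+1) * (u - s)) * f m s) volume 0 u
      · -- compare with the inductive bound
        have hmono : (∫ s in (0:ℝ)..u, Real.exp (lam (m+1) * (u - s)) * f m s) ≤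
            ∫ s in (0:ℝ)..u,
              Real.exp (lam (m+1) * (u - s)) * (P * s ^ θ * Real.exp (lam0 * s)) := by
          apply intervalIntegral.integral_mono_on hu hint
          · exact (Continuous.intervalIntegrable (by fun_prop) 0 u)
          · intro s hs
            exact mul_le_mul_of_nonneg_left ((ih hm s hs.1).2) (Real.exp_nonneg _)
        by_cases hl : lam (m+1) = lam0
        · -- neutral case: λ_{m+1} = λ₀
          have hfilter : ((Finset.Icc 1 (m+1)).filter (fun j => lam j = lam0)).card = θ + 1 := by
            rw [hinsert, Finset.filter_insert, if_pos hl,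
              Finset.card_insert_of_notMem (by simp [Finset.mem_filter])]
          have hcalc : (∫ s in (0:ℝ)..u,
              Real.exp (lam (m+1) * (u - s)) * (P * s ^ θ * Real.exp (lam0 * s))) =
              (P * Real.exp (lam0 * u)) * (u ^ (θ+1) / (θ+1)) := by
            have heq : (fun s => Real.exp (lam (m+1) * (u - s)) * (P * s ^ θ * Real.exp (lam0 * s)))
                = fun s => (P * Real.exp (lam0 * u)) * s ^ θ := by
              funext s
              rw [hl]
              rw [show Real.exp (lam0 * (u - s)) * (P * s ^ θ * Real.exp (lam0 * s)) =
                P * (Real.exp (lam0 * (u - s)) * Real.exp (lam0 * s)) * s ^ θ by ring,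
                ← Real.exp_add, show lam0 * (u - s) + lam0 * s = lam0 * u by ring]
            rw [heq, intervalIntegral.integral_const_mul, integral_pow]
            push_cast
            ring
          have hbound : (∫ s in (0:ℝ)..u,
              Real.exp (lam (m+1) * (u - s)) * (P * s ^ θ * Real.exp (lam0 * s))) ≤
              P * u ^ (θ+1) * Real.exp (lam0 * u) := by
            rw [hcalc]
            have h1 : u ^ (θ+1) / (θ+1 : ℝ) ≤ u ^ (θ+1) := by
              apply div_le_self (by positivity)
              exact_mod_cast Nat.one_le_iff_ne_zero.mpr (Nat.succ_ne_zero θ)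
            calc (P * Real.exp (lam0 * u)) * (u ^ (θ+1) / (θ+1 : ℝ))
                ≤ (P * Real.exp (lam0 * u)) * u ^ (θ+1) := by
                  apply mul_le_mul_of_nonneg_left h1 (by positivity)
              _ = P * u ^ (θ+1) * Real.exp (lam0 * u) := by ring
          rw [hrec', hprod, hfilter, if_pos hl]
          calc c (m+1) * (∫ s in (0:ℝ)..u, Real.exp (lam (m+1) * (u - s)) * f m s)
              ≤ c (m+1) * (P * u ^ (θ+1) * Real.exp (lam0 * u)) := by
                exact mul_le_mul_of_nonneg_left (hmono.trans hbound) hcM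
            _ = P * (c (m+1) * 1) * u ^ (θ+1) * Real.exp (lam0 * u) := by ring
        · -- selective case: λ_{m+1} < λ₀
          have hlt : lam (m+1) < lam0 := lt_of_le_of_ne (hlam (m+1) h1m hik) hl
          have ha : (0:ℝ) < lam0 - lam (m+1) := by linarith
          have hfilter : ((Finset.Icc 1 (m+1)).filter (fun j => lam j = lam0)).card = θ := by
            rw [hinsert, Finset.filter_insert, if_neg hl]
          have hmono2 : (∫ s in (0:ℝ)..u,
              Real.exp (lam (m+1) * (u - s)) * (P * s ^ θ * Real.exp (lam0 * s))) ≤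
              ∫ s in (0:ℝ)..u,
                Real.exp (lam (m+1) * (u - s)) * (P * u ^ θ * Real.exp (lam0 * s)) := by
            apply intervalIntegral.integral_mono_on hu
            · exact (Continuous.intervalIntegrable (by fun_prop) 0 u)
            · exact (Continuous.intervalIntegrable (by fun_prop) 0 u)
            · intro s hs
              have hspow : s ^ θ ≤ u ^ θ := pow_le_pow_left₀ hs.1 hs.2 θ
              have : P * s ^ θ * Real.exp (lam0 * s) ≤ P * u ^ θ * Real.exp (lam0 * s) := by
                apply mul_le_mul_of_nonneg_right _ (Real.exp_nonneg _)
                exact mul_le_mul_of_nonneg_left hspow hP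
              exact mul_le_mul_of_nonneg_left this (Real.exp_nonneg _)
          have hcalc : (∫ s in (0:ℝ)..u,
              Real.exp (lam (m+1) * (u - s)) * (P * u ^ θ * Real.exp (lam0 * s))) =
              (P * u ^ θ * Real.exp (lam (m+1) * u)) *
                ((Real.exp ((lam0 - lam (m+1)) * u) - 1) / (lam0 - lam (m+1))) := by
            have heq : (fun s => Real.exp (lam (m+1) * (u - s)) * (P * u ^ θ * Real.exp (lam0 * s)))
                = fun s => (P * u ^ θ * Real.exp (lam (m+1) * u)) *
                    Real.exp ((lam0 - lam (m+1)) * s) := by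
              funext s
              rw [show Real.exp (lam (m+1) * (u - s)) * (P * u ^ θ * Real.exp (lam0 * s)) =
                P * u ^ θ * (Real.exp (lam (m+1) * (u - s)) * Real.exp (lam0 * s)) by ring,
                ← Real.exp_add, show lam (m+1) * (u - s) + lam0 * s =
                  lam (m+1) * u + (lam0 - lam (m+1)) * s by ring, Real.exp_add]
              ring
            rw [heq, intervalIntegral.integral_const_mul, exp_integral_aux _ _ (ne_of_gt ha)]
          have hbound : (∫ s in (0:ℝ)..u,
              Real.exp (lam (m+1) * (u - s)) * (P * u ^ θ * Real.exp (lam0 * s))) ≤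
              P * (1 / (lam0 - lam (m+1))) * u ^ θ * Real.exp (lam0 * u) := by
            rw [hcalc]
            have key : Real.exp (lam (m+1) * u) * (Real.exp ((lam0 - lam (m+1)) * u) - 1) ≤
                Real.exp (lam0 * u) := by
              have h1 : Real.exp (lam (m+1) * u) * Real.exp ((lam0 - lam (m+1)) * u) =
                  Real.exp (lam0 * u) := by
                rw [← Real.exp_add]; congr 1; ring
              nlinarith [Real.exp_pos (lam (m+1) * u)]
            rw [show (P * u ^ θ * Real.exp (lam (m+1) * u)) *
                ((Real.exp ((lam0 - lam (m+1)) * u) - 1) / (lam0 - lam (m+1))) =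
                (P * u ^ θ / (lam0 - lam (m+1))) *
                  (Real.exp (lam (m+1) * u) * (Real.exp ((lam0 - lam (m+1)) * u) - 1)) by ring,
              show P * (1 / (lam0 - lam (m+1))) * u ^ θ * Real.exp (lam0 * u) =
                (P * u ^ θ / (lam0 - lam (m+1))) * Real.exp (lam0 * u) by ring]
            exact mul_le_mul_of_nonneg_left key (by positivity)
          rw [hrec', hprod, hfilter, if_neg hl]
          calc c (m+1) * (∫ s in (0:ℝ)..u, Real.exp (lam (m+1) * (u - s)) * f m s)
              ≤ c (m+1) * (P * (1 / (lam0 - lam (m+1))) * u ^ θ * Real.exp (lam0 * u)) :=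
                mul_le_mul_of_nonneg_left ((hmono.trans hmono2).trans hbound) hcM
            _ = P * (c (m+1) * (1 / (lam0 - lam (m+1)))) * u ^ θ * Real.exp (lam0 * u) := by ring
      · -- non-integrable case: the integral is zero
        rw [hrec', intervalIntegral.integral_undef hint, mul_zero]
        exact hRHSnn
  intro i h1 h2 u hu
  exact (key i h2 u hu).2
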